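/- For all s ∈ μ_r, v ∈ A_1, and w ∈ A_r: (yv) ⋄_s (zw) = (y ⋄_s 1)(v ⋄_s zw) + z(yv ⋄_s w) − z(y ⋄_s 1)(v ⋄_s w). -/

import Mathlib

open FreeAlgebra

/-- Alphabet of `A_1 = ℚ⟨x,y⟩`. -/
inductive LetA : Type | x : LetA | y : LetA

/-- Alphabet of `A_r = ℚ⟨x, y_s : s ∈ μ_r⟩`; the group `G` plays the role of `μ_r`. -/
inductive LetR (G : Type) : Type | x : LetR G | y : G → LetR G

/-- `A_1 = ℚ⟨x, y⟩`. -/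
abbrev A1 : Type := FreeAlgebra ℚ LetA

/-- `A_r = ℚ⟨x, y_s : s ∈ μ_r⟩`. -/
abbrev Ar (G : Type) : Type := FreeAlgebra ℚ (LetR G)

noncomputable def X1 : A1 := ι ℚ LetA.x
noncomputable def Y1 : A1 := ι ℚ LetA.y

variable {G : Type} [CommGroup G]

noncomputable def Xr : Ar G := ι ℚ LetR.x
noncomputable def Yr (s : G) : Ar G := ι ℚ (LetR.y s)

/-- `z = x + y_1`. -/
noncomputable def zet : Ar G := Xr + Yr 1

open scoped Classical in
/-- `z_s^δ = x + δ(s) y_s` with `δ(1) = 0`, `δ(s) = 1` otherwise. -/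
noncomputable def zdel (s : G) : Ar G := if s = 1 then Xr else Xr + Yr s

/-- The involutive automorphism `φ` of `A_r`: `φ(x) = z`, `φ(y_s) = z_s^δ - z`. -/
noncomputable def phi : Ar G →ₐ[ℚ] Ar G :=
  lift ℚ (fun l => match l with
    | LetR.x => zet
    | LetR.y s => zdel s - zet)

/-- The natural embedding `A_1 → A_r`, `x ↦ x`, `y ↦ y_1`. -/
noncomputable def jm : A1 →ₐ[ℚ] Ar G :=
  lift ℚ (fun l => match l with
    | LetA.x => Xr
    | LetA.y => Yr 1)

open scoped Classical in
/-- The anti-automorphism `τ` of `A_r`: `τ(x) = y_1`, `τ(y_1) = x`, `τ(y_s) = -y_s` (`s ≠ 1`). -/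
noncomputable def tauR : Ar G →ₗ[ℚ] Ar G :=
  (MulOpposite.opLinearEquiv ℚ).symm.toLinearMap ∘ₗ
    (lift ℚ (fun l => match l with
      | LetR.x => MulOpposite.op (Yr 1)
      | LetR.y s => MulOpposite.op (if s = 1 then Xr else -(Yr s)) ) :
        Ar G →ₐ[ℚ] (Ar G)ᵐᵒᵖ).toLinearMap

/-- The anti-automorphism `τ` of `A_1`: `τ(x) = y`, `τ(y) = x`. -/
noncomputable def tau1 : A1 →ₗ[ℚ] A1 :=
  (MulOpposite.opLinearEquiv ℚ).symm.toLinearMap ∘ₗ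
    (lift ℚ (fun l => match l with
      | LetA.x => MulOpposite.op Y1
      | LetA.y => MulOpposite.op X1) : A1 →ₐ[ℚ] A1ᵐᵒᵖ).toLinearMap

/-- `wordP [(a₁,s₁),...,(a_l,s_l)] = x^{a₁} y_{s₁} ⋯ x^{a_l} y_{s_l}`,
i.e. the word `z_{a₁+1, s₁} ⋯ z_{a_l+1, s_l}`. -/
noncomputable def wordP (L : List (ℕ × G)) : Ar G :=
  (L.map (fun p => Xr ^ p.1 * Yr p.2)).prod

/-- Cumulative-product reindexing of subscripts: this realizes the composition `I ∘ M_s`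
on subscript lists, sending `(s₁, s₂, …, s_l)` to `(s s₁, s s₁ s₂, …, s s₁ ⋯ s_l)`. -/
def cumul : G → List (ℕ × G) → List (ℕ × G)
  | _, [] => []
  | g, p :: L => (p.1, g * p.2) :: cumul (g * p.2) L

/-- All the data entering the definition of the diamond products `⋄_s`:
the harmonic product `*`, the maps `ψ_s = φ ∘ I ∘ M_s`, and the family of
`ℚ`-bilinear diamond products `D s : A_1 × A_r → A_r` (together with the
corestriction `D1` of `⋄_1` to `A_1 × A_1 → A_1`), each characterized by its
defining recursive rules. -/
structure DiamondSetup (G : Type) [CommGroup G] where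
  /-- the harmonic product -/
  hst : Ar G →ₗ[ℚ] Ar G →ₗ[ℚ] Ar G
  one_hst : ∀ w, hst 1 w = w
  hst_one : ∀ v, hst v 1 = v
  hst_xr : ∀ v w, hst (v * Xr) w = hst v w * Xr
  hst_xl : ∀ v w, hst v (w * Xr) = hst v w * Xr
  hst_yy : ∀ (v w : Ar G) (s t : G), hst (v * Yr s) (w * Yr t) =
      hst v (w * Yr t) * Yr s + hst (v * Yr s) w * Yr t + hst v w * (Xr * Yr (s * t))
  /-- the linear automorphisms `ψ_s = φ ∘ I ∘ M_s` -/
  psi : G → (Ar G ≃ₗ[ℚ] Ar G)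
  psi_spec : ∀ (s : G) (L : List (ℕ × G)) (a : ℕ),
      psi s (wordP L * Xr ^ a) = phi (wordP (cumul s L) * Xr ^ a)
  /-- the diamond products `⋄_s : A_1 × A_r → A_r` -/
  D : G → A1 →ₗ[ℚ] Ar G →ₗ[ℚ] Ar G
  one_D : ∀ (s : G) (w : Ar G), D s 1 w = w
  D_one : ∀ (s : G) (v : A1), D s v 1 = psi s (phi (jm v))
  Dxx : ∀ (s : G) (v : A1) (w : Ar G), D s (v * X1) (w * Xr) =
      D s v (w * Xr) * Xr - D s (v * Y1) w * Xr
  Dyx : ∀ (s : G) (v : A1) (w : Ar G), D s (v * Y1) (w * Xr) =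
      D s v (w * Xr) * Yr 1 + D s (v * Y1) w * Xr
  Dxy : ∀ (s : G) (v : A1) (w : Ar G), D s (v * X1) (w * Yr 1) =
      D s v (w * Yr 1) * Xr + D s (v * X1) w * Yr 1
  Dyy : ∀ (s : G) (v : A1) (w : Ar G), D s (v * Y1) (w * Yr 1) =
      D s v (w * Yr 1) * Yr 1 - D s (v * X1) w * Yr 1
  Dxyt : ∀ (s t : G), t ≠ 1 → ∀ (v : A1) (w : Ar G), D s (v * X1) (w * Yr t) =
      D s v (w * Yr t) * Xr + D s v (w * (Xr + Yr t)) * Yr t - D s (v * Y1) w * Yr t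
  Dyyt : ∀ (s t : G), t ≠ 1 → ∀ (v : A1) (w : Ar G), D s (v * Y1) (w * Yr t) =
      D s v (w * Yr t) * Yr 1 - D s v (w * (Xr + Yr t)) * Yr t + D s (v * Y1) w * Yr t
  /-- `⋄_1` as a product `A_1 × A_1 → A_1` -/
  D1 : A1 →ₗ[ℚ] A1 →ₗ[ℚ] A1
  D1_spec : ∀ u v : A1, jm (D1 u v) = D 1 u (jm v)

/-!
The defect `Δ_u(v, w) = (uv ⋄_s zw - (u ⋄_s 1)(v ⋄_s zw)) - z (uv ⋄_s w - (u ⋄_s 1)(v ⋄_s w))`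
is assembled from `⋄_s` by left multiplications only, whereas every recursion rule of `⋄_s`
peels off right factors `x, y, y_t`. Hence `Δ_u` obeys the same recursion rules as `⋄_s`, so it
vanishes once it vanishes on both boundaries `v = 1` and `w = 1`.
For `w = 1`: `a ↦ a ⋄_s 1 = ψ_s φ(a)` is the algebra morphism `φ ∘ σ_s ∘ φ`, where
`σ_s : x ↦ x, y ↦ y_s`, and `a ⋄_s z = (a ⋄_s 1) z`.
For `v = 1` and `u ∈ {x, y}`: induction on `w`, using `x ⋄_s 1 + y ⋄_s 1 = z`.
-/

namespace FreeAlgebra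

variable {R X : Type*} [CommSemiring R]

@[elab_as_elim]
theorem induction_mul_ι {motive : FreeAlgebra R X → Prop} (one : motive 1)
    (mul_ι : ∀ a x, motive a → motive (a * ι R x))
    (add : ∀ a b, motive a → motive b → motive (a + b))
    (smul : ∀ (r : R) a, motive a → motive (r • a)) (a : FreeAlgebra R X) : motive a := by
  suffices h : ∀ c, motive c → motive (c * a) by simpa using h 1 one
  induction a with
  | grade0 r => intro c hc; rw [← Algebra.commutes, ← Algebra.smul_def]; exact smul r c hc
  | grade1 x => exact fun c => mul_ι c x
  | mul a b ha hb => intro c hc; rw [← mul_assoc]; exact hb _ (ha c hc)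
  | add a b ha hb => intro c hc; rw [mul_add]; exact add _ _ (ha c hc) (hb c hc)

@[elab_as_elim]
theorem induction_ι_mul {motive : FreeAlgebra R X → Prop} (one : motive 1)
    (ι_mul : ∀ x a, motive a → motive (ι R x * a))
    (add : ∀ a b, motive a → motive b → motive (a + b))
    (smul : ∀ (r : R) a, motive a → motive (r • a)) (a : FreeAlgebra R X) : motive a := by
  suffices h : ∀ c, motive c → motive (a * c) by simpa using h 1 one
  induction a with
  | grade0 r => intro c hc; rw [← Algebra.smul_def]; exact smul r c hc
  | grade1 x => exact ι_mul x
  | mul a b ha hb => intro c hc; rw [mul_assoc]; exact ha _ (hb c hc)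
  | add a b ha hb => intro c hc; rw [add_mul]; exact add _ _ (ha c hc) (hb c hc)

end FreeAlgebra

set_option linter.unusedSectionVars false

structure IsDiamondRecursive (F : A1 →ₗ[ℚ] Ar G →ₗ[ℚ] Ar G) : Prop where
  xx : ∀ v w, F (v * X1) (w * Xr) = F v (w * Xr) * Xr - F (v * Y1) w * Xr
  yx : ∀ v w, F (v * Y1) (w * Xr) = F v (w * Xr) * Yr 1 + F (v * Y1) w * Xr
  xy : ∀ v w, F (v * X1) (w * Yr 1) = F v (w * Yr 1) * Xr + F (v * X1) w * Yr 1
  yy : ∀ v w, F (v * Y1) (w * Yr 1) = F v (w * Yr 1) * Yr 1 - F (v * X1) w * Yr 1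
  xyt : ∀ t : G, t ≠ 1 → ∀ v w, F (v * X1) (w * Yr t) =
      F v (w * Yr t) * Xr + F v (w * (Xr + Yr t)) * Yr t - F (v * Y1) w * Yr t
  yyt : ∀ t : G, t ≠ 1 → ∀ v w, F (v * Y1) (w * Yr t) =
      F v (w * Yr t) * Yr 1 - F v (w * (Xr + Yr t)) * Yr t + F (v * Y1) w * Yr t

theorem DiamondSetup.isDiamondRecursive (S : DiamondSetup G) (s : G) :
    IsDiamondRecursive (S.D s) :=
  ⟨S.Dxx s, S.Dyx s, S.Dxy s, S.Dyy s, S.Dxyt s, S.Dyyt s⟩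

noncomputable def leftTranslate (a : Ar G) (u : A1) (w₀ : Ar G)
    (F : A1 →ₗ[ℚ] Ar G →ₗ[ℚ] Ar G) : A1 →ₗ[ℚ] Ar G →ₗ[ℚ] Ar G :=
  (F.compl₁₂ (LinearMap.mulLeft ℚ u) (LinearMap.mulLeft ℚ w₀)).compr₂ (LinearMap.mulLeft ℚ a)

@[simp]
theorem leftTranslate_apply (a : Ar G) (u : A1) (w₀ : Ar G) (F : A1 →ₗ[ℚ] Ar G →ₗ[ℚ] Ar G)
    (v : A1) (w : Ar G) : leftTranslate a u w₀ F v w = a * F (u * v) (w₀ * w) := rfl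

namespace IsDiamondRecursive

variable {F F' : A1 →ₗ[ℚ] Ar G →ₗ[ℚ] Ar G}

theorem leftTranslate (hF : IsDiamondRecursive F) (a : Ar G) (u : A1) (w₀ : Ar G) :
    IsDiamondRecursive (leftTranslate a u w₀ F) := by
  constructor <;> intros <;>
    simp only [leftTranslate_apply, ← mul_assoc, hF.xx, hF.yx, hF.xy, hF.yy, hF.xyt, hF.yyt,
      *, ne_eq, not_false_eq_true] <;> noncomm_ring

theorem sub (hF : IsDiamondRecursive F) (hF' : IsDiamondRecursive F') :
    IsDiamondRecursive (F - F') := by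
  constructor <;> intros <;>
    simp only [LinearMap.sub_apply, hF.xx, hF.yx, hF.xy, hF.yy, hF.xyt, hF.yyt,
      hF'.xx, hF'.yx, hF'.xy, hF'.yy, hF'.xyt, hF'.yyt, *, ne_eq, not_false_eq_true] <;>
    noncomm_ring

theorem apply_eq_zero (hF : IsDiamondRecursive F) (h_one_left : ∀ w, F 1 w = 0)
    (h_one_right : ∀ v, F v 1 = 0) (v : A1) (w : Ar G) : F v w = 0 := by
  induction v using FreeAlgebra.induction_mul_ι generalizing w with
  | one => exact h_one_left w
  | mul_ι v l ih =>
    suffices h : ∀ w, F (v * X1) w = 0 ∧ F (v * Y1) w = 0 by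
      cases l
      exacts [(h w).1, (h w).2]
    intro w
    induction w using FreeAlgebra.induction_mul_ι with
    | one => exact ⟨h_one_right _, h_one_right _⟩
    | mul_ι w b ihw =>
      cases b with
      | x =>
        change F _ (w * Xr) = 0 ∧ F _ (w * Xr) = 0
        simp [hF.xx, hF.yx, ih, ihw]
      | y t =>
        change F _ (w * Yr t) = 0 ∧ F _ (w * Yr t) = 0
        rcases eq_or_ne t 1 with rfl | ht
        · simp [hF.xy, hF.yy, ih, ihw]
        · simp [hF.xyt t ht, hF.yyt t ht, mul_add, ih, ihw]
    | add w w' hw hw' => simp [hw, hw']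
    | smul r w hw => simp [hw]
  | add v v' hv hv' => simp [hv, hv']
  | smul r v hv => simp [hv]

end IsDiamondRecursive

noncomputable def defect (F : A1 →ₗ[ℚ] Ar G →ₗ[ℚ] Ar G) (u : A1) :
    A1 →ₗ[ℚ] Ar G →ₗ[ℚ] Ar G :=
  let B := leftTranslate 1 u 1 F - leftTranslate (F u 1) 1 1 F
  leftTranslate 1 1 zet B - leftTranslate zet 1 1 B

theorem defect_apply (F : A1 →ₗ[ℚ] Ar G →ₗ[ℚ] Ar G) (u v : A1) (w : Ar G) :
    defect F u v w =
      F (u * v) (zet * w) - F u 1 * F v (zet * w) - zet * (F (u * v) w - F u 1 * F v w) := by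
  simp [defect]

theorem IsDiamondRecursive.defect {F : A1 →ₗ[ℚ] Ar G →ₗ[ℚ] Ar G} (hF : IsDiamondRecursive F)
    (u : A1) : IsDiamondRecursive (defect F u) :=
  let hB := (hF.leftTranslate 1 u 1).sub (hF.leftTranslate (F u 1) 1 1)
  (hB.leftTranslate 1 1 zet).sub (hB.leftTranslate zet 1 1)

noncomputable def substY (s : G) : A1 →ₐ[ℚ] Ar G :=
  lift ℚ fun
    | .x => Xr
    | .y => Yr s

noncomputable def phi1 : A1 →ₐ[ℚ] A1 :=
  lift ℚ fun
    | .x => X1 + Y1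
    | .y => -Y1

@[simp] theorem phi_Xr : phi (Xr : Ar G) = zet := lift_ι_apply _ _

@[simp] theorem phi_Yr (t : G) : phi (Yr t) = zdel t - zet := lift_ι_apply _ _

@[simp] theorem jm_X1 : jm X1 = (Xr : Ar G) := lift_ι_apply _ _

@[simp] theorem jm_Y1 : jm Y1 = (Yr 1 : Ar G) := lift_ι_apply _ _

@[simp] theorem substY_X1 (s : G) : substY s X1 = Xr := lift_ι_apply _ _

@[simp] theorem substY_Y1 (s : G) : substY s Y1 = Yr s := lift_ι_apply _ _

@[simp] theorem phi1_X1 : phi1 X1 = X1 + Y1 := lift_ι_apply _ _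

@[simp] theorem phi1_Y1 : phi1 Y1 = -Y1 := lift_ι_apply _ _

theorem phi_comp_jm : (phi : Ar G →ₐ[ℚ] Ar G).comp jm = jm.comp phi1 := by
  ext l
  cases l
  · change phi (jm X1) = jm (phi1 X1)
    simp [zet]
  · change phi (jm Y1) = jm (phi1 Y1)
    simp [zdel, zet]

theorem cumul_of_forall_snd_eq_one (s : G) {L : List (ℕ × G)} (hL : ∀ p ∈ L, p.2 = 1) :
    cumul s L = L.map fun p => (p.1, s) := by
  induction L generalizing s with
  | nil => rfl
  | cons p L ih => simp [cumul, hL p (by simp), ih s fun q hq => hL q (by simp [hq])]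

namespace DiamondSetup

variable (S : DiamondSetup G) (s : G)

theorem psi_wordP_mul_pow_mul_jm (b : A1) (L : List (ℕ × G)) (a : ℕ) (hL : ∀ p ∈ L, p.2 = 1) :
    S.psi s (wordP L * Xr ^ a * jm b) =
      phi (wordP (L.map fun p => (p.1, s)) * Xr ^ a * substY s b) := by
  induction b using FreeAlgebra.induction_ι_mul generalizing L a with
  | one => simpa [cumul_of_forall_snd_eq_one s hL] using S.psi_spec s L a
  | ι_mul l b ih =>
    cases l
    · change S.psi s (_ * jm (X1 * b)) = phi (_ * substY s (X1 * b))
      simpa [pow_succ, mul_assoc] using ih L (a + 1) hL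
    · change S.psi s (_ * jm (Y1 * b)) = phi (_ * substY s (Y1 * b))
      have hL' : ∀ p ∈ L ++ [(a, 1)], p.2 = 1 := fun p hp =>
        (List.mem_append.1 hp).elim (hL p) fun hp => by simp_all
      simpa [wordP, mul_assoc] using ih (L ++ [(a, 1)]) 0 hL'
  | add b b' hb hb' => simp [mul_add, hb L a hL, hb' L a hL]
  | smul r b hb => simp [hb L a hL]

theorem psi_jm (b : A1) : S.psi s (jm b) = phi (substY s b) := by
  simpa [wordP] using S.psi_wordP_mul_pow_mul_jm s b [] 0 (by simp)

theorem D_one_eq (v : A1) : S.D s v 1 = phi (substY s (phi1 v)) := by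
  rw [S.D_one, ← AlgHom.comp_apply, phi_comp_jm, AlgHom.comp_apply, psi_jm]

theorem D_one_mul (u v : A1) : S.D s (u * v) 1 = S.D s u 1 * S.D s v 1 := by
  simp only [D_one_eq, map_mul]

theorem D_X1_one_add_D_Y1_one : S.D s X1 1 + S.D s Y1 1 = zet := by
  rw [D_one_eq, D_one_eq, ← map_add, ← map_add, ← map_add]
  simp [zet]

theorem D_zet (a : A1) : S.D s a zet = S.D s a 1 * zet := by
  have hD := S.isDiamondRecursive s
  have hY1 : S.D s Y1 1 = zet - S.D s X1 1 := eq_sub_of_add_eq' (S.D_X1_one_add_D_Y1_one s)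
  induction a using FreeAlgebra.induction_mul_ι with
  | one => simp [S.one_D]
  | mul_ι a l ih =>
    have hXr : S.D s a Xr = S.D s a 1 * zet - S.D s a (Yr 1) := by
      rw [← ih, zet, map_add, add_sub_cancel_right]
    cases l
    · change S.D s (a * X1) zet = S.D s (a * X1) 1 * zet
      have hx := hD.xx a 1
      have hy := hD.xy a 1
      simp only [one_mul] at hx hy
      rw [zet, map_add, hx, hy, hXr, S.D_one_mul, S.D_one_mul, hY1, zet]
      noncomm_ring
    · change S.D s (a * Y1) zet = S.D s (a * Y1) 1 * zet
      have hx := hD.yx a 1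
      have hy := hD.yy a 1
      simp only [one_mul] at hx hy
      rw [zet, map_add, hx, hy, hXr, S.D_one_mul, S.D_one_mul, hY1, zet]
      noncomm_ring
  | add a a' ha ha' => simp [ha, ha', add_mul]
  | smul r a ha => simp [ha]

theorem defect_one_right (u v : A1) : defect (S.D s) u v 1 = 0 := by
  simp only [defect_apply, mul_one, D_zet, D_one_mul]
  noncomm_ring

theorem defect_X1_one_and_defect_Y1_one (w : Ar G) :
    defect (S.D s) X1 1 w = 0 ∧ defect (S.D s) Y1 1 w = 0 := by
  have hD := S.isDiamondRecursive s
  have hY1 : S.D s Y1 1 = zet - S.D s X1 1 := eq_sub_of_add_eq' (S.D_X1_one_add_D_Y1_one s)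
  induction w using FreeAlgebra.induction_mul_ι with
  | one => exact ⟨S.defect_one_right s _ _, S.defect_one_right s _ _⟩
  | mul_ι w l ih =>
    simp only [defect_apply, mul_one, S.one_D] at ih
    obtain ⟨hX, hY⟩ := ih
    replace hX := eq_add_of_sub_eq (sub_eq_zero.1 hX)
    replace hY := eq_add_of_sub_eq (sub_eq_zero.1 hY)
    cases l with
    | x =>
      change defect _ X1 1 (w * Xr) = 0 ∧ defect _ Y1 1 (w * Xr) = 0
      have hx := hD.xx 1
      have hy := hD.yx 1
      simp only [one_mul, S.one_D] at hx hy
      simp only [defect_apply, mul_one, S.one_D, ← mul_assoc, hx, hy, hY, hY1]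
      constructor <;> noncomm_ring
    | y t =>
      change defect _ X1 1 (w * Yr t) = 0 ∧ defect _ Y1 1 (w * Yr t) = 0
      rcases eq_or_ne t 1 with rfl | ht
      · have hx := hD.xy 1
        have hy := hD.yy 1
        simp only [one_mul, S.one_D] at hx hy
        simp only [defect_apply, mul_one, S.one_D, ← mul_assoc, hx, hy, hX, hY1]
        constructor <;> noncomm_ring
      · have hx := hD.xyt t ht 1
        have hy := hD.yyt t ht 1
        simp only [one_mul, S.one_D] at hx hy
        simp only [defect_apply, mul_one, S.one_D, ← mul_assoc, hx, hy, hY, hY1]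
        constructor <;> noncomm_ring
  | add w w' hw hw' => simp [hw.1, hw.2, hw'.1, hw'.2]
  | smul r w hw => simp [hw.1, hw.2]

end DiamondSetup

/-- For all `s ∈ μ_r`, `v ∈ A_1`, `w ∈ A_r`:
`(yv) ⋄_s (zw) = (y ⋄_s 1)(v ⋄_s zw) + z(yv ⋄_s w) − z(y ⋄_s 1)(v ⋄_s w)`. -/
theorem statement11 {G : Type} [CommGroup G] (S : DiamondSetup G)
    (s : G) (v : A1) (w : Ar G) :
    S.D s (Y1 * v) (zet * w) =
      S.D s Y1 1 * S.D s v (zet * w) + zet * S.D s (Y1 * v) w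
        - zet * (S.D s Y1 1 * S.D s v w) := by
  have h := ((S.isDiamondRecursive s).defect Y1).apply_eq_zero
    (fun w => (S.defect_X1_one_and_defect_Y1_one s w).2) (S.defect_one_right s Y1) v w
  rw [defect_apply, sub_eq_zero] at h
  rw [add_sub_assoc, ← mul_sub]
  exact eq_add_of_sub_eq' h
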